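/- Let n = 2ϑ+1 be an odd integer with ϑ ≥ 3. Then the three-element vertex set {p_2, p_{ϑ+1}, p_n} is a resolving set of the convex polytope graph Δ_n; i.e., any two distinct vertices of Δ_n have different distance vectors to (p_2, p_{ϑ+1}, p_n). -/

import Mathlib

/-- Vertices of the heptagonal circular ladder: four families indexed by `ZMod n`. -/
inductive HCLVertex (n : ℕ) : Type
  | p (t : ZMod n) : HCLVertex n
  | q (t : ZMod n) : HCLVertex n
  | r (t : ZMod n) : HCLVertex n
  | s (t : ZMod n) : HCLVertex n
deriving DecidableEq

/-- Base relation giving the edges of the heptagonal circular ladder `Γ_n`: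
`p_t p_{t+1}`, `p_t q_t`, `q_t r_t`, `r_t s_t`, `s_t r_{t+1}` (indices mod `n`). -/
def gammaRel (n : ℕ) : HCLVertex n → HCLVertex n → Prop
  | .p t, .p u => u = t + 1
  | .p t, .q u => u = t
  | .q t, .r u => u = t
  | .r t, .s u => u = t
  | .s t, .r u => u = t + 1
  | _, _ => False

/-- The heptagonal circular ladder `Γ_n`. -/
def Gamma (n : ℕ) : SimpleGraph (HCLVertex n) :=
  SimpleGraph.fromRel (gammaRel n)

/-- The extra edges `r_t q_{t+1}` added to `Γ_n` to obtain `Δ_n`. -/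
def deltaRel (n : ℕ) : HCLVertex n → HCLVertex n → Prop
  | .r t, .q u => u = t + 1
  | _, _ => False

/-- The convex polytope graph `Δ_n`, obtained from `Γ_n` by adding the edges `r_t q_{t+1}`. -/
def Delta (n : ℕ) : SimpleGraph (HCLVertex n) :=
  SimpleGraph.fromRel (fun v w => gammaRel n v w ∨ deltaRel n v w)

/-- `W` is a resolving set of `G`: every pair of distinct vertices is distinguished by
its distance to some vertex of `W`. -/
def IsResolving {V : Type*} (G : SimpleGraph V) (W : Set V) : Prop :=
  ∀ u v : V, u ≠ v → ∃ w ∈ W, G.dist w u ≠ G.dist w v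

/-- Distance from a vertex `x` to an edge `e = yz`: `min (d x y) (d x z)`. -/
noncomputable def edgeDist {V : Type*} (G : SimpleGraph V) (x : V) (e : Sym2 V) : ℕ :=
  Sym2.lift ⟨fun y z => min (G.dist x y) (G.dist x z), fun y z => min_comm _ _⟩ e

/-- `W` is an edge resolving set of `G`: every pair of distinct edges is distinguished by
its distance to some vertex of `W`. -/
def IsEdgeResolving {V : Type*} (G : SimpleGraph V) (W : Set V) : Prop :=
  ∀ e ∈ G.edgeSet, ∀ f ∈ G.edgeSet, e ≠ f → ∃ w ∈ W, edgeDist G w e ≠ edgeDist G w f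

/-!
A vertex of level `l` (`p, q, r, s ↦ 0, 1, 2, 3`) and index `b` lies at distance
`l + min k (n - (l - 1) - k)` from `p_a`, where `k` is the residue of `b - a`: every path from `p_a`
runs along the `p`-cycle and then climbs `l` rungs, and the edges `r_t q_{t+1}` and `s_t r_{t+1}`
let an `r`-vertex save one step of the cycle and an `s`-vertex two. The formula is verified by
checking that it changes by at most one along every edge and drops by exactly one along some edge
at every vertex other than `p_a`.

With distances explicit, the landmarks `p_0` and `p_2` separate two vertices of the same level, the
antipodal pair `p_0`, `p_{ϑ+1}` separates levels unless they are `q, r` or `r, s`, and all three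
landmarks together separate those.
-/

namespace SimpleGraph

variable {V : Type*} {G : SimpleGraph V}

lemma le_add_length_of_adj_le (f : V → ℕ) (hf : ∀ u v, G.Adj u v → f v ≤ f u + 1)
    {u v : V} (w : G.Walk u v) : f v ≤ f u + w.length := by
  induction w with
  | nil => simp
  | cons h _ ih => have := hf _ _ h; rw [Walk.length_cons]; omega

theorem dist_eq_of_adj_le_of_exists_adj {a : V} (f : V → ℕ) (ha : f a = 0)
    (hf : ∀ u v, G.Adj u v → f v ≤ f u + 1)
    (hdesc : ∀ v, v ≠ a → ∃ u, G.Adj u v ∧ f u + 1 = f v) (v : V) :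
    G.dist a v = f v := by
  have upper : ∀ k v, f v = k → G.Reachable a v ∧ G.dist a v ≤ k := by
    intro k
    induction k with
    | zero =>
      intro v hv
      obtain rfl : v = a := by_contra fun hva => by obtain ⟨u, -, hu⟩ := hdesc v hva; omega
      simp
    | succ k ih =>
      intro v hv
      obtain ⟨u, hadj, hu⟩ := hdesc v (by rintro rfl; omega)
      obtain ⟨hreach, hdist⟩ := ih u (by omega)
      obtain ⟨w, hw⟩ := hreach.exists_walk_length_eq_dist
      refine ⟨hreach.trans hadj.reachable, ?_⟩
      have := dist_le (w.concat hadj)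
      rw [Walk.length_concat] at this
      omega
  obtain ⟨hreach, hdist⟩ := upper (f v) v rfl
  obtain ⟨w, hw⟩ := hreach.exists_walk_length_eq_dist
  have := le_add_length_of_adj_le f hf w
  omega

end SimpleGraph

namespace ZMod

variable {n : ℕ} [NeZero n]

lemma val_add_natCast_cases (x : ZMod n) {c : ℕ} (hc : c ≤ n) :
    (x + (c : ZMod n)).val = x.val + c ∨ (x + (c : ZMod n)).val + n = x.val + c := by
  have hx := x.val_lt
  rw [val_add, val_natCast, Nat.add_mod_mod]
  rcases lt_or_ge (x.val + c) n with h | h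
  · rw [Nat.mod_eq_of_lt h]; omega
  · rw [Nat.mod_eq_sub_mod h, Nat.mod_eq_of_lt (by omega)]; omega

lemma val_sub_natCast_cases (x : ZMod n) {c : ℕ} (hc : c ≤ n) :
    (x - (c : ZMod n)).val + c = x.val ∨ (x - (c : ZMod n)).val + c = x.val + n := by
  have := val_add_natCast_cases (x - (c : ZMod n)) hc
  rw [sub_add_cancel] at this
  omega

lemma val_add_one_cases (x : ZMod n) :
    (x + 1).val = x.val + 1 ∨ (x + 1).val + n = x.val + 1 := by
  simpa using val_add_natCast_cases x (c := 1) NeZero.one_le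

lemma val_sub_one_cases (x : ZMod n) :
    (x - 1).val + 1 = x.val ∨ (x - 1).val + 1 = x.val + n := by
  simpa using val_sub_natCast_cases x (c := 1) NeZero.one_le

end ZMod

namespace HCLVertex

variable {n : ℕ}

def index : HCLVertex n → ZMod n
  | p t | q t | r t | s t => t

def level : HCLVertex n → ℕ
  | p _ => 0
  | q _ => 1
  | r _ => 2
  | s _ => 3

lemma level_le_three (v : HCLVertex n) : v.level ≤ 3 := by
  cases v <;> simp [level]

lemma eq_of_index_eq_of_level_eq {u v : HCLVertex n} (hi : u.index = v.index)
    (hl : u.level = v.level) : u = v := by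
  cases u <;> cases v <;> simp_all [index, level]

end HCLVertex

namespace HCL

open ZMod

variable {n : ℕ}

lemma delta_adj_of_rel {u v : HCLVertex n} (hne : u ≠ v)
    (h : gammaRel n u v ∨ deltaRel n u v ∨ gammaRel n v u ∨ deltaRel n v u) : (Delta n).Adj u v :=
  SimpleGraph.fromRel_adj _ _ _ |>.mpr ⟨hne, by tauto⟩

/-- The subtraction `l - 1` truncates: `p`- and `q`-vertices both see the whole `n`-cycle. -/
def ladderDist (n l k : ℕ) : ℕ := min k (n - (l - 1) - k) + l

variable [NeZero n]

def circDist (x : ZMod n) : ℕ := min x.val (n - x.val)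

lemma circDist_eq_zero_iff (x : ZMod n) : circDist x = 0 ↔ x = 0 := by
  have := x.val_lt
  rw [circDist, ← val_eq_zero]
  omega

lemma circDist_add_one_le (x : ZMod n) : circDist (x + 1) ≤ circDist x + 1 := by
  have := x.val_lt; have := val_add_one_cases x
  unfold circDist; omega

lemma circDist_le_circDist_add_one_add_one (x : ZMod n) : circDist x ≤ circDist (x + 1) + 1 := by
  have := x.val_lt; have := val_add_one_cases x
  unfold circDist; omega

/-- `r_b` is reached from `p_a` through `q_b` or `q_{b+1}`, and `s_b` through `r_b` or `r_{b+1}`. -/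
def distFromP (a : ZMod n) : HCLVertex n → ℕ
  | .p b => circDist (b - a)
  | .q b => circDist (b - a) + 1
  | .r b => min (circDist (b - a)) (circDist (b - a + 1)) + 2
  | .s b => min (circDist (b - a)) (min (circDist (b - a + 1)) (circDist (b - a + 2))) + 3

lemma distFromP_le_add_one_of_rel (a : ZMod n) {u v : HCLVertex n}
    (h : gammaRel n u v ∨ deltaRel n u v) :
    distFromP a v ≤ distFromP a u + 1 ∧ distFromP a u ≤ distFromP a v + 1 := by
  have step (x : ZMod n) :=
    And.intro (circDist_add_one_le x) (circDist_le_circDist_add_one_add_one x)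
  rcases u with b | b | b | b <;> rcases v with c | c | c | c <;>
    simp only [gammaRel, deltaRel, or_false, false_or] at h <;> subst c <;>
    simp only [distFromP, add_sub_right_comm _ (1 : ZMod n), add_assoc, one_add_one_eq_two] <;>
    have := step (b - a) <;> have := step (b - a + 1) <;>
    simp only [add_assoc, one_add_one_eq_two] at * <;> omega

lemma exists_adj_distFromP_add_one (a : ZMod n) {v : HCLVertex n} (hv : v ≠ .p a) :
    ∃ u, (Delta n).Adj u v ∧ distFromP a u + 1 = distFromP a v := by
  suffices ∃ u, (gammaRel n u v ∨ deltaRel n u v ∨ gammaRel n v u ∨ deltaRel n v u) ∧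
      distFromP a u + 1 = distFromP a v by
    obtain ⟨u, hrel, hu⟩ := this
    exact ⟨u, delta_adj_of_rel (fun h => by subst h; omega) hrel, hu⟩
  rcases v with b | b | b | b <;> simp only [distFromP]
  · have hx : (b - a).val ≠ 0 := by
      rw [val_ne_zero, sub_ne_zero]; exact fun h => hv (h ▸ rfl)
    have := (b - a).val_lt
    by_cases hb : 2 * (b - a).val ≤ n
    · refine ⟨.p (b - 1), Or.inl (sub_add_cancel b 1).symm, ?_⟩
      have := val_sub_one_cases (b - a); have := (b - a - 1).val_lt
      simp only [sub_right_comm b 1 a, circDist]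
      omega
    · refine ⟨.p (b + 1), Or.inr (Or.inr (Or.inl rfl)), ?_⟩
      have := val_add_one_cases (b - a); have := (b - a + 1).val_lt
      simp only [add_sub_right_comm b 1 a, circDist]
      omega
  · exact ⟨.p b, Or.inl rfl, rfl⟩
  · by_cases hb : circDist (b - a) ≤ circDist (b - a + 1)
    · exact ⟨.q b, Or.inl rfl, by dsimp only; omega⟩
    · refine ⟨.q (b + 1), Or.inr (Or.inr (Or.inr rfl)), ?_⟩
      simp only [add_sub_right_comm b 1 a]
      omega
  · by_cases hb : min (circDist (b - a)) (circDist (b - a + 1)) ≤ circDist (b - a + 2)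
    · exact ⟨.r b, Or.inl rfl, by dsimp only; omega⟩
    · refine ⟨.r (b + 1), Or.inr (Or.inr (Or.inl rfl)), ?_⟩
      simp only [add_sub_right_comm b 1 a, add_assoc, one_add_one_eq_two]
      omega

theorem dist_p_eq_distFromP (a : ZMod n) (v : HCLVertex n) :
    (Delta n).dist (.p a) v = distFromP a v := by
  refine SimpleGraph.dist_eq_of_adj_le_of_exists_adj _ ?_ ?_
    (fun _ => exists_adj_distFromP_add_one a) v
  · simp [distFromP, circDist_eq_zero_iff]
  · intro u v huv
    rw [Delta, SimpleGraph.fromRel_adj] at huv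
    rcases huv.2 with h | h
    · exact (distFromP_le_add_one_of_rel a h).1
    · exact (distFromP_le_add_one_of_rel a h).2

theorem distFromP_eq_ladderDist (a : ZMod n) (v : HCLVertex n) :
    distFromP a v = ladderDist n v.level (v.index - a).val := by
  cases v with
  | p b | q b => rfl
  | r b =>
    have := (b - a).val_lt; have := (b - a + 1).val_lt; have := val_add_one_cases (b - a)
    simp only [distFromP, circDist, ladderDist, HCLVertex.level, HCLVertex.index]
    omega
  | s b =>
    have := (b - a).val_lt; have := (b - a + 1).val_lt; have := (b - a + 2).val_lt
    have := val_add_one_cases (b - a); have := val_add_one_cases (b - a + 1)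
    simp only [distFromP, circDist, ladderDist, HCLVertex.level, HCLVertex.index, add_assoc,
      one_add_one_eq_two] at *
    omega

lemma index_eq_of_ladderDist_eq (hn : 7 ≤ n) {l : ℕ} (hl : l ≤ 3) {x y : ZMod n}
    (h₀ : ladderDist n l x.val = ladderDist n l y.val)
    (h₂ : ladderDist n l (x - 2).val = ladderDist n l (y - 2).val) : x = y := by
  have := x.val_lt; have := y.val_lt; have := (x - 2).val_lt; have := (y - 2).val_lt
  have := val_sub_natCast_cases x (c := 2) (by omega)
  have := val_sub_natCast_cases y (c := 2) (by omega)
  simp only [ladderDist, Nat.cast_ofNat] at *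
  exact val_injective n (by omega)

lemma false_of_ladderDist_eq_of_far_levels {ϑ : ℕ} (hn : n = 2 * ϑ + 1) {l m : ℕ}
    (hlm : l < m) (hfar : l = 0 ∨ l + 2 ≤ m) (hm : m ≤ 3) {x y : ZMod n}
    (h₀ : ladderDist n l x.val = ladderDist n m y.val)
    (hmid : ladderDist n l (x - (ϑ + 1 : ℕ)).val = ladderDist n m (y - (ϑ + 1 : ℕ)).val) :
    False := by
  have := x.val_lt; have := y.val_lt
  have := (x - (ϑ + 1 : ℕ)).val_lt; have := (y - (ϑ + 1 : ℕ)).val_lt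
  have := val_sub_natCast_cases x (c := ϑ + 1) (by omega)
  have := val_sub_natCast_cases y (c := ϑ + 1) (by omega)
  unfold ladderDist at *
  interval_cases m <;> interval_cases l <;> omega

set_option maxHeartbeats 1000000 in
lemma false_of_ladderDist_eq_of_adjacent_levels {ϑ : ℕ} (hϑ : 3 ≤ ϑ) (hn : n = 2 * ϑ + 1)
    {l : ℕ} (hl : 1 ≤ l) (hl' : l ≤ 2) {x y : ZMod n}
    (h₀ : ladderDist n l x.val = ladderDist n (l + 1) y.val)
    (h₂ : ladderDist n l (x - 2).val = ladderDist n (l + 1) (y - 2).val)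
    (hmid : ladderDist n l (x - (ϑ + 1 : ℕ)).val = ladderDist n (l + 1) (y - (ϑ + 1 : ℕ)).val) :
    False := by
  have := x.val_lt; have := y.val_lt; have := (x - 2).val_lt; have := (y - 2).val_lt
  have := (x - (ϑ + 1 : ℕ)).val_lt; have := (y - (ϑ + 1 : ℕ)).val_lt
  have := val_sub_natCast_cases x (c := 2) (by omega)
  have := val_sub_natCast_cases y (c := 2) (by omega)
  have := val_sub_natCast_cases x (c := ϑ + 1) (by omega)
  have := val_sub_natCast_cases y (c := ϑ + 1) (by omega)
  simp only [ladderDist, Nat.cast_ofNat] at *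
  interval_cases l <;> omega

lemma level_eq_of_ladderDist_eq {ϑ : ℕ} (hϑ : 3 ≤ ϑ) (hn : n = 2 * ϑ + 1) {l m : ℕ}
    (hl : l ≤ 3) (hm : m ≤ 3) {x y : ZMod n}
    (h₀ : ladderDist n l x.val = ladderDist n m y.val)
    (h₂ : ladderDist n l (x - 2).val = ladderDist n m (y - 2).val)
    (hmid : ladderDist n l (x - (ϑ + 1 : ℕ)).val = ladderDist n m (y - (ϑ + 1 : ℕ)).val) :
    l = m := by
  wlog hlm : l < m generalizing l m x y
  · rcases lt_or_eq_of_le (not_lt.mp hlm) with hml | rfl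
    · exact (this hm hl h₀.symm h₂.symm hmid.symm hml).symm
    · rfl
  by_cases hfar : l = 0 ∨ l + 2 ≤ m
  · exact (false_of_ladderDist_eq_of_far_levels hn hlm hfar hm h₀ hmid).elim
  · obtain rfl : m = l + 1 := by omega
    exact (false_of_ladderDist_eq_of_adjacent_levels hϑ hn (by omega) (by omega) h₀ h₂ hmid).elim

theorem eq_of_distFromP_eq {ϑ : ℕ} (hϑ : 3 ≤ ϑ) (hn : n = 2 * ϑ + 1) {u v : HCLVertex n}
    (h₀ : distFromP 0 u = distFromP 0 v) (h₂ : distFromP 2 u = distFromP 2 v)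
    (hmid : distFromP ((ϑ + 1 : ℕ) : ZMod n) u = distFromP ((ϑ + 1 : ℕ) : ZMod n) v) :
    u = v := by
  simp only [distFromP_eq_ladderDist, sub_zero] at h₀ h₂ hmid
  have hl := level_eq_of_ladderDist_eq hϑ hn u.level_le_three v.level_le_three h₀ h₂ hmid
  rw [hl] at h₀ h₂
  exact HCLVertex.eq_of_index_eq_of_level_eq
    (index_eq_of_ladderDist_eq (by omega) v.level_le_three h₀ h₂) hl

end HCL

theorem delta_resolving_odd (ϑ n : ℕ) (hϑ : 3 ≤ ϑ) (hn : n = 2 * ϑ + 1) :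
    IsResolving (Delta n)
      {HCLVertex.p (2 : ZMod n), HCLVertex.p ((ϑ + 1 : ℕ) : ZMod n),
        HCLVertex.p ((n : ℕ) : ZMod n)} := by
  have : NeZero n := ⟨by omega⟩
  intro u v huv
  by_contra! h
  simp only [Set.mem_insert_iff, Set.mem_singleton_iff, forall_eq_or_imp, forall_eq,
    HCL.dist_p_eq_distFromP, ZMod.natCast_self] at h
  exact huv (HCL.eq_of_distFromP_eq hϑ hn h.2.2 h.1 h.2.1)
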